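/- With the notation of the previous lemma, for every δ > 0 there exists C = C(d,δ) ≥ 1 such that for all t ∈ [d/2+δ, 1/δ], all q ≥ 0, and all m ∈ B_q^d with m ≠ 0, one has C^{-1} 2^{-2qt} ≤ M_q^t(m) − |m|^{-2t} ≤ C 2^{-2qt}. -/

import Mathlib

open scoped BigOperators

/-- Euclidean norm of a lattice point `m ∈ ℤ^d`. -/
noncomputable def enorm {d : ℕ} (m : Fin d → ℤ) : ℝ :=
  Real.sqrt (∑ i, ((m i : ℝ))^2)

/-- `M_q^t(m) = Σ_{β ∈ ℤ^d} |m + 2^q β|^{-2t}`; terms with `m + 2^q β = 0` vanish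
since `0^{-2t} = 0` for the real power with `-2t ≠ 0`, which encodes the omission
of the `β`-term producing `0` in the definition from the paper. -/
noncomputable def Mq (d q : ℕ) (t : ℝ) (m : Fin d → ℤ) : ℝ :=
  ∑' β : Fin d → ℤ, _root_.enorm (fun i => m i + 2^q * β i) ^ (-(2*t))

/-- The box `B_q^d = [-2^{q-1}, 2^{q-1}-1]^d ⊂ ℤ^d`. -/
noncomputable def Bqset (d q : ℕ) : Finset (Fin d → ℤ) :=
  Fintype.piFinset (fun _ => Finset.Icc (-(2:ℤ)^(q-1)) ((2:ℤ)^(q-1) - 1))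

/-!
Dropping the term `β = 0`, `M_q^t(m) - |m|^{-2t}` is the sum over `β ≠ 0`. The lattice sum
`Z(s) = ∑_β |β|^{-s}` converges for `s > d` and decreases in `s`. For `q ≥ 1` every coordinate of
`m ∈ B_q^d` is at most `2^{q-1}` in absolute value, so `|m + 2^q β| ≥ 2^{q-1} |β|` coordinatewise
and the sum is at most `2^{-2(q-1)t} Z(2t)`; for `q = 0`, `M_0^t(m)` is a translate of `Z(2t)`.
From below, the single term `β = -e_i` has `|m - 2^q e_i| ≤ (√d + 1) 2^q`. For
`t ∈ [d/2 + δ, 1/δ]` all these factors are bounded in terms of `d` and `δ` only.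
-/

namespace LatticeSum

open Real

variable {d q : ℕ} {t : ℝ}

lemma enorm_eq_norm (m : Fin d → ℤ) :
    _root_.enorm m = ‖(WithLp.toLp 2 fun i => (m i : ℝ) : EuclideanSpace ℝ (Fin d))‖ := by
  simp [_root_.enorm, EuclideanSpace.norm_eq]

lemma enorm_nonneg (m : Fin d → ℤ) : 0 ≤ _root_.enorm m := sqrt_nonneg _

lemma abs_le_enorm (m : Fin d → ℤ) (i : Fin d) : |(m i : ℝ)| ≤ _root_.enorm m := by
  simpa [enorm_eq_norm] using PiLp.norm_apply_le (WithLp.toLp 2 fun i => (m i : ℝ)) i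

lemma one_le_enorm {m : Fin d → ℤ} (hm : m ≠ 0) : 1 ≤ _root_.enorm m := by
  obtain ⟨i, hi⟩ := Function.ne_iff.1 hm
  calc (1 : ℝ) ≤ |(m i : ℝ)| := by exact_mod_cast Int.one_le_abs hi
    _ ≤ _ := abs_le_enorm m i

lemma enorm_add_le (m n : Fin d → ℤ) :
    _root_.enorm (m + n) ≤ _root_.enorm m + _root_.enorm n := by
  have h : (WithLp.toLp 2 fun i => ((m + n) i : ℝ) : EuclideanSpace ℝ (Fin d)) =
      (WithLp.toLp 2 fun i => (m i : ℝ)) + WithLp.toLp 2 fun i => (n i : ℝ) := by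
    ext i; simp
  simpa only [enorm_eq_norm, h] using norm_add_le _ _

lemma enorm_single (i : Fin d) (k : ℤ) : _root_.enorm (Pi.single i k) = |(k : ℝ)| := by
  have h : (WithLp.toLp 2 fun j => ((Pi.single i k : Fin d → ℤ) j : ℝ) : EuclideanSpace ℝ (Fin d)) =
      EuclideanSpace.single i (k : ℝ) := by
    ext j; by_cases hj : j = i <;> simp [hj]
  rw [enorm_eq_norm, h, PiLp.norm_single, Real.norm_eq_abs]

lemma enorm_le_sqrt_mul {m : Fin d → ℤ} {M : ℝ} (hM0 : 0 ≤ M) (hM : ∀ i, |(m i : ℝ)| ≤ M) :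
    _root_.enorm m ≤ √d * M := by
  calc _root_.enorm m ≤ √(∑ _i : Fin d, M ^ 2) := by
        refine sqrt_le_sqrt <| Finset.sum_le_sum fun i _ => ?_
        simpa only [sq_abs] using pow_le_pow_left₀ (abs_nonneg _) (hM i) 2
    _ = √d * M := by simp [sqrt_mul (Nat.cast_nonneg d), sqrt_sq hM0]

lemma mul_enorm_le_enorm {β v : Fin d → ℤ} {c : ℝ} (hc : 0 ≤ c)
    (h : ∀ i, c * |(β i : ℝ)| ≤ |(v i : ℝ)|) : c * _root_.enorm β ≤ _root_.enorm v := by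
  rw [_root_.enorm, _root_.enorm, ← sqrt_sq hc, ← sqrt_mul (sq_nonneg c), Finset.mul_sum]
  refine sqrt_le_sqrt <| Finset.sum_le_sum fun i _ => ?_
  simpa only [mul_pow, sq_abs] using pow_le_pow_left₀ (by positivity) (h i) 2

lemma enorm_rpow_neg_le_of_le {s₀ s : ℝ} (hs₀ : 0 < s₀) (h : s₀ ≤ s) (γ : Fin d → ℤ) :
    _root_.enorm γ ^ (-s) ≤ _root_.enorm γ ^ (-s₀) := by
  rcases eq_or_ne γ 0 with rfl | hγ
  · simp [_root_.enorm, zero_rpow (neg_ne_zero.2 hs₀.ne'),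
      zero_rpow (neg_ne_zero.2 (hs₀.trans_le h).ne')]
  · exact rpow_le_rpow_of_exponent_le (one_le_enorm hγ) (neg_le_neg h)

lemma summable_enorm_rpow_neg {s : ℝ} (hs : d < s) :
    Summable fun γ : Fin d → ℤ => _root_.enorm γ ^ (-s) := by
  let b := (EuclideanSpace.basisFun (Fin d) ℝ).toBasis
  let L := Submodule.span ℤ (Set.range b)
  have hL : Module.finrank ℤ L = d := by
    rw [Module.finrank_eq_card_basis (b.restrictScalars ℤ)]; simp
  let toL (γ : Fin d → ℤ) : L := ⟨WithLp.toLp 2 fun i => (γ i : ℝ),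
    (b.mem_span_iff_repr_mem ℤ _).2 fun i => ⟨γ i, by simp [b]⟩⟩
  have htoL : Function.Injective toL := fun γ γ' h => by
    ext i
    simpa [toL] using congrFun (congrArg (WithLp.ofLp ∘ Subtype.val) h) i
  refine ((ZLattice.summable_norm_rpow L (-s) (by rw [hL]; linarith)).comp_injective htoL).congr
    fun γ => ?_
  rw [enorm_eq_norm]
  rfl

lemma tsum_enorm_rpow_neg_le {s₀ s : ℝ} (hs₀ : d < s₀) (h : s₀ ≤ s) :
    ∑' γ : Fin d → ℤ, _root_.enorm γ ^ (-s) ≤ ∑' γ : Fin d → ℤ, _root_.enorm γ ^ (-s₀) := by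
  have h0 : 0 < s₀ := (Nat.cast_nonneg d).trans_lt hs₀
  exact Summable.tsum_le_tsum (enorm_rpow_neg_le_of_le h0 h)
    (summable_enorm_rpow_neg (hs₀.trans_le h)) (summable_enorm_rpow_neg hs₀)

lemma abs_le_of_mem_Bqset {m : Fin d → ℤ} (hm : m ∈ Bqset d q) (i : Fin d) :
    |(m i : ℝ)| ≤ 2 ^ (q - 1) := by
  have := Finset.mem_Icc.1 (Fintype.mem_piFinset.1 hm i)
  have h : |m i| ≤ 2 ^ (q - 1) := abs_le.2 ⟨this.1, by linarith [this.2]⟩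
  exact_mod_cast h

lemma summable_Mq_summand (hdt : d < 2 * t) (q : ℕ) (m : Fin d → ℤ) :
    Summable fun β : Fin d → ℤ => _root_.enorm (fun i => m i + 2 ^ q * β i) ^ (-(2 * t)) := by
  refine (summable_enorm_rpow_neg hdt).comp_injective fun β β' h => funext fun i => ?_
  exact mul_left_cancel₀ (by positivity) (add_left_cancel (congrFun h i))

lemma Mq_zero (m : Fin d → ℤ) : Mq d 0 t m = ∑' γ : Fin d → ℤ, _root_.enorm γ ^ (-(2 * t)) := by
  simp only [Mq, pow_zero, one_mul]
  exact (Equiv.addLeft m).tsum_eq fun γ => _root_.enorm γ ^ (-(2 * t))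

lemma hasSum_update_Mq_summand (hdt : d < 2 * t) (m : Fin d → ℤ) :
    HasSum (Function.update (fun β : Fin d → ℤ =>
        _root_.enorm (fun i => m i + 2 ^ q * β i) ^ (-(2 * t))) 0 0)
      (Mq d q t m - _root_.enorm m ^ (-(2 * t))) := by
  have h := (summable_Mq_summand hdt q m).hasSum.update 0 0
  simp only [Pi.zero_apply, mul_zero, add_zero, zero_sub, neg_add_eq_sub] at h
  exact h

lemma mul_abs_le_abs_add_two_mul_mul {a N : ℝ} (ha : |a| ≤ N) (b : ℤ) :
    N * |(b : ℝ)| ≤ |a + 2 * N * b| := by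
  rcases eq_or_ne b 0 with rfl | hb
  · simp
  have hb1 : (1 : ℝ) ≤ |(b : ℝ)| := by exact_mod_cast Int.one_le_abs hb
  have hN : 0 ≤ N := (abs_nonneg a).trans ha
  calc N * |(b : ℝ)| ≤ |2 * N * b| - |a| := by
        rw [abs_mul, abs_of_nonneg (by positivity : 0 ≤ 2 * N)]; nlinarith
    _ ≤ |a + 2 * N * b| := by
        simpa only [add_comm] using abs_sub_abs_le_abs_add (2 * N * b) a

lemma two_pow_mul_enorm_le_enorm (hq : q ≠ 0) {m : Fin d → ℤ} (hm : m ∈ Bqset d q)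
    (β : Fin d → ℤ) :
    (2 : ℝ) ^ (q - 1) * _root_.enorm β ≤ _root_.enorm (fun i => m i + 2 ^ q * β i) := by
  refine mul_enorm_le_enorm (by positivity) fun i => ?_
  have h2 : (2 : ℝ) ^ q = 2 * 2 ^ (q - 1) := (mul_pow_sub_one hq 2).symm
  simpa [h2, mul_assoc] using mul_abs_le_abs_add_two_mul_mul (abs_le_of_mem_Bqset hm i) (β i)

lemma enorm_add_two_pow_mul_rpow_le (hq : q ≠ 0) (ht : 0 ≤ t) {m β : Fin d → ℤ}
    (hm : m ∈ Bqset d q) (hβ : β ≠ 0) :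
    _root_.enorm (fun i => m i + 2 ^ q * β i) ^ (-(2 * t)) ≤
      ((2 : ℝ) ^ (q - 1)) ^ (-(2 * t)) * _root_.enorm β ^ (-(2 * t)) := by
  have hpos : 0 < (2 : ℝ) ^ (q - 1) * _root_.enorm β :=
    mul_pos (by positivity) (zero_lt_one.trans_le (one_le_enorm hβ))
  calc _ ≤ ((2 : ℝ) ^ (q - 1) * _root_.enorm β) ^ (-(2 * t)) :=
        rpow_le_rpow_of_nonpos hpos (two_pow_mul_enorm_le_enorm hq hm β) (by linarith)
    _ = _ := mul_rpow (by positivity) (enorm_nonneg β)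

lemma two_pow_rpow (q : ℕ) (t : ℝ) : ((2 : ℝ) ^ q) ^ (-(2 * t)) = 2 ^ (-(2 * (q : ℝ) * t)) := by
  rw [← rpow_natCast, ← rpow_mul zero_le_two]
  ring_nf

lemma Mq_sub_enorm_rpow_le (hdt : d < 2 * t) {m : Fin d → ℤ} (hm : m ∈ Bqset d q) :
    Mq d q t m - _root_.enorm m ^ (-(2 * t)) ≤
      2 ^ (2 * t) * (∑' γ : Fin d → ℤ, _root_.enorm γ ^ (-(2 * t))) * 2 ^ (-(2 * (q : ℝ) * t)) := by
  have ht : 0 < t := by linarith [(Nat.cast_nonneg d : (0 : ℝ) ≤ d)]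
  rcases Nat.eq_zero_or_pos q with rfl | hq
  · have hS : 0 ≤ ∑' γ : Fin d → ℤ, _root_.enorm γ ^ (-(2 * t)) :=
      tsum_nonneg fun γ => rpow_nonneg (enorm_nonneg γ) _
    have h2 : 1 ≤ (2 : ℝ) ^ (2 * t) := one_le_rpow one_le_two (by positivity)
    rw [Mq_zero]
    simp only [CharP.cast_eq_zero, mul_zero, zero_mul, neg_zero, rpow_zero, mul_one]
    nlinarith [rpow_nonneg (enorm_nonneg m) (-(2 * t))]
  · set c : ℝ := ((2 : ℝ) ^ (q - 1)) ^ (-(2 * t))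
    have hc : c = 2 ^ (2 * t) * ((2 : ℝ) ^ q) ^ (-(2 * t)) := by
      rw [← mul_pow_sub_one hq.ne' (2 : ℝ), mul_rpow zero_le_two (by positivity), ← mul_assoc,
        ← rpow_add zero_lt_two, add_neg_cancel, rpow_zero, one_mul]
    have hterm : ∀ β, Function.update (fun β : Fin d → ℤ =>
        _root_.enorm (fun i => m i + 2 ^ q * β i) ^ (-(2 * t))) 0 0 β ≤
          c * _root_.enorm β ^ (-(2 * t)) := by
      intro β
      rcases eq_or_ne β 0 with rfl | hβ
      · simpa using mul_nonneg (rpow_nonneg (by positivity) _) (rpow_nonneg (enorm_nonneg _) _)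
      · rw [Function.update_of_ne hβ]
        exact enorm_add_two_pow_mul_rpow_le hq.ne' ht.le hm hβ
    calc _ ≤ c * ∑' γ : Fin d → ℤ, _root_.enorm γ ^ (-(2 * t)) :=
          hasSum_le hterm (hasSum_update_Mq_summand hdt m)
            ((summable_enorm_rpow_neg hdt).hasSum.mul_left c)
      _ = _ := by rw [hc, two_pow_rpow]; ring

lemma le_Mq_sub_enorm_rpow (hdt : d < 2 * t) {m : Fin d → ℤ} (hm : m ∈ Bqset d q)
    (hm0 : m ≠ 0) :
    (√d + 1) ^ (-(2 * t)) * 2 ^ (-(2 * (q : ℝ) * t)) ≤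
      Mq d q t m - _root_.enorm m ^ (-(2 * t)) := by
  have ht : 0 < t := by linarith [(Nat.cast_nonneg d : (0 : ℝ) ≤ d)]
  obtain ⟨i, -⟩ := Function.ne_iff.1 hm0
  set v := m + Pi.single i (-2 ^ q)
  have hv : (fun j => m j + 2 ^ q * (Pi.single i (-1) : Fin d → ℤ) j) = v := by
    ext j; by_cases hj : j = i <;> simp [v, hj]
  have hv0 : v ≠ 0 := by
    intro h
    have hvi : m i + -2 ^ q = 0 := by simpa [v] using congrFun h i
    have hmi := (Finset.mem_Icc.1 (Fintype.mem_piFinset.1 hm i)).2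
    have : (2 : ℤ) ^ (q - 1) ≤ 2 ^ q := pow_le_pow_right₀ one_le_two (Nat.sub_le q 1)
    linarith
  have hv_le : _root_.enorm v ≤ (√d + 1) * 2 ^ q := by
    have : (2 : ℝ) ^ (q - 1) ≤ 2 ^ q := pow_le_pow_right₀ one_le_two (Nat.sub_le q 1)
    calc _root_.enorm v ≤ _root_.enorm m + _root_.enorm (Pi.single i (-2 ^ q) : Fin d → ℤ) :=
          enorm_add_le _ _
      _ ≤ √d * 2 ^ (q - 1) + 2 ^ q := by
          rw [enorm_single]
          gcongr
          · exact enorm_le_sqrt_mul (by positivity) (abs_le_of_mem_Bqset hm)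
          · simp
      _ ≤ (√d + 1) * 2 ^ q := by nlinarith [sqrt_nonneg d]
  calc (√d + 1) ^ (-(2 * t)) * 2 ^ (-(2 * (q : ℝ) * t)) = ((√d + 1) * 2 ^ q) ^ (-(2 * t)) := by
        rw [mul_rpow (by positivity) (by positivity), two_pow_rpow]
    _ ≤ _root_.enorm v ^ (-(2 * t)) :=
        rpow_le_rpow_of_nonpos (zero_lt_one.trans_le (one_le_enorm hv0)) hv_le (by linarith)
    _ = Function.update (fun β : Fin d → ℤ =>
          _root_.enorm (fun i => m i + 2 ^ q * β i) ^ (-(2 * t))) 0 0 (Pi.single i (-1)) := by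
        rw [Function.update_of_ne (by simp), hv]
    _ ≤ _ := le_hasSum (hasSum_update_Mq_summand hdt m) _ fun β _ => by
        rcases eq_or_ne β 0 with rfl | hβ
        · simp
        · rw [Function.update_of_ne hβ]
          exact rpow_nonneg (enorm_nonneg _) _

end LatticeSum

open LatticeSum Real

theorem stmt1_general (d : ℕ) (δ : ℝ) (hδ : 0 < δ) :
    ∃ C : ℝ, 1 ≤ C ∧
      ∀ t ∈ Set.Icc ((d:ℝ)/2 + δ) (1/δ), ∀ q : ℕ, ∀ m ∈ Bqset d q, m ≠ 0 →
        C⁻¹ * (2:ℝ) ^ (-(2*(q:ℝ)*t)) ≤ Mq d q t m - _root_.enorm m ^ (-(2*t)) ∧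
          Mq d q t m - _root_.enorm m ^ (-(2*t)) ≤ C * (2:ℝ) ^ (-(2*(q:ℝ)*t)) := by
  set Z := ∑' γ : Fin d → ℤ, _root_.enorm γ ^ (-(d + 2 * δ))
  set A := (√d + 1) ^ (2 / δ)
  have hZ : 0 ≤ Z := tsum_nonneg fun γ => rpow_nonneg (enorm_nonneg γ) _
  have hA : 1 ≤ A := one_le_rpow (by linarith [sqrt_nonneg d]) (by positivity)
  have hAZ : 0 ≤ 2 ^ (2 / δ) * Z := by positivity
  refine ⟨A + 2 ^ (2 / δ) * Z, by linarith, ?_⟩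
  rintro t ⟨ht₀, ht₁⟩ q m hm hm0
  have hdt : d < 2 * t := by linarith
  have h2t : 2 * t ≤ 2 / δ := by linarith [show 2 / δ = 2 * (1 / δ) by ring]
  constructor
  · refine le_trans ?_ (le_Mq_sub_enorm_rpow hdt hm hm0)
    gcongr
    rw [rpow_neg (by positivity)]
    gcongr
    calc (√d + 1) ^ (2 * t) ≤ A := rpow_le_rpow_of_exponent_le (by linarith [sqrt_nonneg d]) h2t
      _ ≤ A + 2 ^ (2 / δ) * Z := by linarith
  · refine (Mq_sub_enorm_rpow_le hdt hm).trans ?_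
    gcongr
    calc 2 ^ (2 * t) * ∑' γ : Fin d → ℤ, _root_.enorm γ ^ (-(2 * t)) ≤ 2 ^ (2 / δ) * Z := by
          refine mul_le_mul (rpow_le_rpow_of_exponent_le one_le_two h2t)
            (tsum_enorm_rpow_neg_le (by linarith) (by linarith)) ?_ (by positivity)
          exact tsum_nonneg fun γ => rpow_nonneg (enorm_nonneg γ) _
      _ ≤ A + 2 ^ (2 / δ) * Z := by linarith

theorem stmt1 (d : ℕ) (hd : 1 ≤ d) (δ : ℝ) (hδ : 0 < δ) :
    ∃ C : ℝ, 1 ≤ C ∧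
      ∀ t ∈ Set.Icc ((d:ℝ)/2 + δ) (1/δ), ∀ q : ℕ, ∀ m ∈ Bqset d q, m ≠ 0 →
        C⁻¹ * (2:ℝ) ^ (-(2*(q:ℝ)*t)) ≤ Mq d q t m - _root_.enorm m ^ (-(2*t)) ∧
          Mq d q t m - _root_.enorm m ^ (-(2*t)) ≤ C * (2:ℝ) ^ (-(2*(q:ℝ)*t)) :=
  stmt1_general d δ hδ
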